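/- arXiv:2509.01737 — 4 statements merged into one kernel-verified Lean document; each statement's English description precedes it below -/
import Mathlib

section
/- Let (Ω, ℱ, P) be a probability space and 𝒯 ⊆ ℱ a sub-σ-algebra. Let α̂ and β̂ be square-integrable real random variables and set α := E[α̂ | 𝒯] and β := E[β̂ | 𝒯]. Suppose v_α, v_β, v_αβ are integrable real random variables satisfying, almost surely, E[v_α | 𝒯] = E[(α̂ − α)² | 𝒯], E[v_β | 𝒯] = E[(β̂ − β)² | 𝒯], and E[v_αβ | 𝒯] = E[(α̂ − α)(β̂ − β) | 𝒯]. Then E[(β − α)²] = E[(β̂ − α̂)²] − E[v_β + v_α − 2·v_αβ]. -/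
/-!
Since `β − α = E[β̂ − α̂ | 𝒯]`, Pythagoras for the `L²`-projection `E[· | 𝒯]` gives
`E[(β − α)²] = E[(β̂ − α̂)²] − E[R²]` with residual `R = (β̂ − β) − (α̂ − α)`. Expanding `R²`,
each of its three moments is matched by the corresponding variance estimate through the tower
property `E[v] = E[E[v | 𝒯]]`.
-/

open MeasureTheory ProbabilityTheory

section

variable {Ω : Type*} {m m₀ : MeasurableSpace Ω} {μ : Measure Ω}

lemma integral_eq_of_condExp_ae_eq (hm : m ≤ m₀) [SigmaFinite (μ.trim hm)] {f g : Ω → ℝ}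
    (h : μ[f|m] =ᵐ[μ] μ[g|m]) : ∫ ω, f ω ∂μ = ∫ ω, g ω ∂μ := by
  rw [← integral_condExp hm, ← integral_condExp hm (f := g)]
  exact integral_congr_ae h

lemma integral_condExp_sq_eq_integral_sq_sub (hm : m ≤ m₀) [IsFiniteMeasure μ] {X : Ω → ℝ}
    (hX : MemLp X 2 μ) :
    ∫ ω, (μ[X|m] ω) ^ 2 ∂μ = ∫ ω, X ω ^ 2 ∂μ - ∫ ω, (X ω - μ[X|m] ω) ^ 2 ∂μ := by
  have hvar : ∫ ω, (X ω - μ[X|m] ω) ^ 2 ∂μ =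
      ∫ ω, X ω ^ 2 ∂μ - ∫ ω, (μ[X|m] ω) ^ 2 ∂μ :=
    calc ∫ ω, (X ω - μ[X|m] ω) ^ 2 ∂μ
        = ∫ ω, Var[X; μ | m] ω ∂μ := (integral_condExp hm).symm
      _ = ∫ ω, (μ[X ^ 2|m] ω - μ[X|m] ω ^ 2) ∂μ :=
          integral_congr_ae (condVar_ae_eq_condExp_sq_sub_sq_condExp hm hX)
      _ = ∫ ω, X ω ^ 2 ∂μ - ∫ ω, (μ[X|m] ω) ^ 2 ∂μ := by
          rw [integral_sub integrable_condExp (hX.condExp one_le_two).integrable_sq,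
            integral_condExp hm]
          rfl
  linarith

lemma integral_sub_sq {f g : Ω → ℝ} (hf : MemLp f 2 μ) (hg : MemLp g 2 μ) :
    ∫ ω, (f ω - g ω) ^ 2 ∂μ =
      ∫ ω, f ω ^ 2 ∂μ + ∫ ω, g ω ^ 2 ∂μ - 2 * ∫ ω, f ω * g ω ∂μ := by
  have hfg : Integrable (fun ω => f ω * g ω) μ := hf.integrable_mul hg
  calc ∫ ω, (f ω - g ω) ^ 2 ∂μ
      = ∫ ω, (f ω ^ 2 + g ω ^ 2 - 2 * (f ω * g ω)) ∂μ := by congr with ω; ring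
    _ = _ := by
      rw [integral_sub (f := fun ω => f ω ^ 2 + g ω ^ 2)
          (hf.integrable_sq.add hg.integrable_sq) (hfg.const_mul 2),
        integral_add hf.integrable_sq hg.integrable_sq, integral_const_mul]

end

/-- Identification of the prediction-error variance `E[(β − α)²]` in the
meta-analytic framework: with `α := E[α̂ | 𝒯]`, `β := E[β̂ | 𝒯]`, and
conditionally unbiased within-trial (co)variance estimates `v_α, v_β, v_αβ`,
one has `E[(β − α)²] = E[(β̂ − α̂)²] − E[v_β + v_α − 2 v_αβ]`. -/
theorem prediction_error_variance_identification
    {Ω : Type*} {mΩ : MeasurableSpace Ω} (P : Measure Ω) [IsProbabilityMeasure P]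
    (𝒯 : MeasurableSpace Ω) (h𝒯 : 𝒯 ≤ mΩ)
    (αhat βhat : Ω → ℝ) (hαhat : MemLp αhat 2 P) (hβhat : MemLp βhat 2 P)
    (vα vβ vαβ : Ω → ℝ)
    (hvα : Integrable vα P) (hvβ : Integrable vβ P) (hvαβ : Integrable vαβ P)
    (hvα' : P[vα|𝒯] =ᵐ[P]
      P[(fun ω => (αhat ω - (P[αhat|𝒯]) ω) ^ 2)|𝒯])
    (hvβ' : P[vβ|𝒯] =ᵐ[P]
      P[(fun ω => (βhat ω - (P[βhat|𝒯]) ω) ^ 2)|𝒯])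
    (hvαβ' : P[vαβ|𝒯] =ᵐ[P]
      P[(fun ω => (αhat ω - (P[αhat|𝒯]) ω) * (βhat ω - (P[βhat|𝒯]) ω))|𝒯]) :
    ∫ ω, ((P[βhat|𝒯]) ω - (P[αhat|𝒯]) ω) ^ 2 ∂P =
      (∫ ω, (βhat ω - αhat ω) ^ 2 ∂P)
        - ∫ ω, (vβ ω + vα ω - 2 * vαβ ω) ∂P := by
  set α := P[αhat|𝒯]
  set β := P[βhat|𝒯]
  have hcond : P[βhat - αhat|𝒯] =ᵐ[P] β - α :=
    condExp_sub (hβhat.integrable one_le_two) (hαhat.integrable one_le_two) 𝒯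
  have hα : MemLp (fun ω => αhat ω - α ω) 2 P := hαhat.sub (hαhat.condExp one_le_two)
  have hβ : MemLp (fun ω => βhat ω - β ω) 2 P := hβhat.sub (hβhat.condExp one_le_two)
  calc ∫ ω, (β ω - α ω) ^ 2 ∂P
      = ∫ ω, (P[βhat - αhat|𝒯] ω) ^ 2 ∂P :=
        integral_congr_ae (by filter_upwards [hcond] with ω hω; rw [hω, Pi.sub_apply])
    _ = ∫ ω, (βhat ω - αhat ω) ^ 2 ∂P
          - ∫ ω, ((βhat - αhat) ω - P[βhat - αhat|𝒯] ω) ^ 2 ∂P :=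
        integral_condExp_sq_eq_integral_sq_sub h𝒯 (hβhat.sub hαhat)
    _ = ∫ ω, (βhat ω - αhat ω) ^ 2 ∂P
          - ∫ ω, ((βhat ω - β ω) - (αhat ω - α ω)) ^ 2 ∂P := by
        congr 1
        refine integral_congr_ae ?_
        filter_upwards [hcond] with ω hω
        simp only [hω, Pi.sub_apply]
        ring
    _ = _ := by
        rw [integral_sub_sq hβ hα,
          integral_sub (f := fun ω => vβ ω + vα ω) (hvβ.add hvα) (hvαβ.const_mul 2),
          integral_add hvβ hvα, integral_const_mul, integral_eq_of_condExp_ae_eq h𝒯 hvα',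
          integral_eq_of_condExp_ae_eq h𝒯 hvβ', integral_eq_of_condExp_ae_eq h𝒯 hvαβ']
        simp_rw [mul_comm (βhat _ - β _)]
end

section
/- Let (Ω, ℱ, P) be a probability space with Ω a standard Borel space, let X : Ω → 𝒳 and S : Ω → 𝒮 be measurable maps into measurable spaces, let Z : Ω → {0,1} be measurable, and let Y : Ω → ℝ be bounded and measurable. Let 𝒢 denote the σ-algebra generated by ω ↦ (X(ω), S(ω)), and write E[Y | 𝒢] for the conditional expectation of Y given 𝒢 (the surrogate index g₀(X,S)). If Y and Z are conditionally independent given 𝒢, then for every z ∈ {0,1} one has ∫_{{Z = z}} Y dP = ∫_{{Z = z}} E[Y | 𝒢] dP; consequently, if P(Z=1) > 0 and P(Z=0) > 0, then for every function f : ℝ × ℝ → ℝ, f(E[Y | Z=1], E[Y | Z=0]) = f(E[E[Y|𝒢] | Z=1], E[E[Y|𝒢] | Z=0]), where E[W | Z=z] := P(Z=z)⁻¹ ∫_{{Z=z}} W dP. -/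
/-!
For `B = {Z = z}`, conditional independence of `Y` and `Z` given `𝒢` says that `1_B` and
`P[1_B | 𝒢]` have the same integral over every set of `σ(Y)`, hence
`E[Y 1_B] = E[Y P[1_B | 𝒢]]`. Since `P[1_B | 𝒢]` is `𝒢`-measurable, it can be pulled through
the conditional expectation: `E[Y P[1_B | 𝒢]] = E[E[Y | 𝒢] P[1_B | 𝒢]] = E[E[Y | 𝒢] 1_B]`.
-/

open MeasureTheory ProbabilityTheory

section PullOut

variable {Ω : Type*} {m m₀ : MeasurableSpace Ω} {μ : Measure Ω}

theorem integral_mul_indicator_one {s : Set Ω} (hs : MeasurableSet s)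
    (f : Ω → ℝ) : ∫ ω, f ω * s.indicator 1 ω ∂μ = ∫ ω in s, f ω ∂μ := by
  rw [← integral_indicator hs]
  congr 1 with ω
  by_cases hω : ω ∈ s <;> simp [hω]

theorem norm_condExp_indicator_le_one (s : Set Ω) : ∀ᵐ ω ∂μ, ‖(μ⟦s|m⟧) ω‖ ≤ 1 := by
  simpa using ae_bdd_abs_condExp_of_ae_bdd_abs (m := m) (μ := μ) (R := (1 : ℝ))
    (f := s.indicator fun _ ↦ 1) (.of_forall fun ω ↦ by by_cases hω : ω ∈ s <;> simp [hω])

theorem integral_mul_condExp (hm : m ≤ m₀) [SigmaFinite (μ.trim hm)] {f g : Ω → ℝ}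
    (hg : StronglyMeasurable[m] g) (hgf : Integrable (fun ω ↦ g ω * f ω) μ)
    (hf : Integrable f μ) :
    ∫ ω, g ω * (μ[f|m]) ω ∂μ = ∫ ω, g ω * f ω ∂μ :=
  calc ∫ ω, g ω * (μ[f|m]) ω ∂μ = ∫ ω, (μ[g * f|m]) ω ∂μ :=
        integral_congr_ae (condExp_mul_of_stronglyMeasurable_left hg hgf hf).symm
    _ = ∫ ω, g ω * f ω ∂μ := integral_condExp hm

theorem integral_mul_eq_of_forall_setIntegral_eq (hm : m ≤ m₀) [SigmaFinite (μ.trim hm)]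
    {f₁ f₂ g : Ω → ℝ} (hg : StronglyMeasurable[m] g) (hf₁ : Integrable f₁ μ)
    (hf₂ : Integrable f₂ μ) (hgf₁ : Integrable (fun ω ↦ g ω * f₁ ω) μ)
    (hgf₂ : Integrable (fun ω ↦ g ω * f₂ ω) μ)
    (h : ∀ s, MeasurableSet[m] s → ∫ ω in s, f₁ ω ∂μ = ∫ ω in s, f₂ ω ∂μ) :
    ∫ ω, g ω * f₁ ω ∂μ = ∫ ω, g ω * f₂ ω ∂μ := by
  have hcond : μ[f₁|m] =ᵐ[μ] μ[f₂|m] :=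
    ae_eq_condExp_of_forall_setIntegral_eq hm hf₂ (fun _ _ _ ↦ integrable_condExp.integrableOn)
      (fun s hs _ ↦ (setIntegral_condExp hm hf₁ hs).trans (h s hs))
      stronglyMeasurable_condExp.aestronglyMeasurable
  rw [← integral_mul_condExp hm hg hgf₁ hf₁, ← integral_mul_condExp hm hg hgf₂ hf₂]
  exact integral_congr_ae (hcond.mono fun ω hω ↦ congrArg (g ω * ·) hω)

end PullOut

namespace ProbabilityTheory

variable {Ω β β' : Type*} {m m₀ : MeasurableSpace Ω} [StandardBorelSpace Ω] {hm : m ≤ m₀}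
  {μ : Measure Ω} [IsFiniteMeasure μ] [MeasurableSpace β] [MeasurableSpace β']
  {f : Ω → β} {g : Ω → β'} {s : Set β} {t : Set β'}

theorem CondIndepFun.measureReal_inter_preimage_eq_setIntegral (h : CondIndepFun m hm f g μ)
    (hf : Measurable f) (hg : Measurable g) (hs : MeasurableSet s) (ht : MeasurableSet t) :
    μ.real (f ⁻¹' s ∩ g ⁻¹' t) = ∫ ω in f ⁻¹' s, (μ⟦g ⁻¹' t|m⟧) ω ∂μ := by
  have hA := hf hs
  have hAi : Integrable ((f ⁻¹' s).indicator 1) μ := (integrable_const (1 : ℝ)).indicator hA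
  calc μ.real (f ⁻¹' s ∩ g ⁻¹' t) = ∫ ω, (μ⟦f ⁻¹' s ∩ g ⁻¹' t|m⟧) ω ∂μ := by
        rw [integral_condExp hm]; exact (integral_indicator_one (hA.inter (hg ht))).symm
    _ = ∫ ω, (μ⟦g ⁻¹' t|m⟧) ω * (μ⟦f ⁻¹' s|m⟧) ω ∂μ :=
        integral_congr_ae <| ((condIndepFun_iff_condExp_inter_preimage_eq_mul hf hg).mp h
          s t hs ht).mono fun ω hω ↦ hω.trans (mul_comm _ _)
    _ = ∫ ω, (μ⟦g ⁻¹' t|m⟧) ω * (f ⁻¹' s).indicator 1 ω ∂μ :=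
        integral_mul_condExp hm stronglyMeasurable_condExp
          (hAi.bdd_mul integrable_condExp.aestronglyMeasurable (norm_condExp_indicator_le_one _))
          hAi
    _ = ∫ ω in f ⁻¹' s, (μ⟦g ⁻¹' t|m⟧) ω ∂μ := integral_mul_indicator_one hA _

theorem CondIndepFun.setIntegral_condExp_preimage {Y : Ω → ℝ} (h : CondIndepFun m hm Y g μ)
    (hY : Measurable Y) (hYi : Integrable Y μ) (hg : Measurable g) (ht : MeasurableSet t) :
    ∫ ω in g ⁻¹' t, (μ[Y|m]) ω ∂μ = ∫ ω in g ⁻¹' t, Y ω ∂μ := by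
  set B := g ⁻¹' t
  have hB : MeasurableSet B := hg ht
  have hBi : Integrable (B.indicator 1) μ := (integrable_const (1 : ℝ)).indicator hB
  have hB_le : ∀ᵐ ω ∂μ, ‖B.indicator (1 : Ω → ℝ) ω‖ ≤ 1 :=
    .of_forall fun ω ↦ by by_cases hω : ω ∈ B <;> simp [hω]
  have hP_le := norm_condExp_indicator_le_one (m := m) (μ := μ) B
  have hP_meas :=
    (integrable_condExp (m := m) (μ := μ) (f := B.indicator fun _ ↦ (1 : ℝ))).aestronglyMeasurable
  have hY_swap : ∫ ω, Y ω * B.indicator 1 ω ∂μ = ∫ ω, Y ω * (μ⟦B|m⟧) ω ∂μ := by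
    refine integral_mul_eq_of_forall_setIntegral_eq hY.comap_le
      (comap_measurable Y).stronglyMeasurable hBi integrable_condExp
      (hYi.mul_bdd hBi.aestronglyMeasurable hB_le) (hYi.mul_bdd hP_meas hP_le) ?_
    rintro _ ⟨s, hs, rfl⟩
    rw [integral_indicator_one hB, measureReal_restrict_apply hB, Set.inter_comm]
    exact h.measureReal_inter_preimage_eq_setIntegral hY hg hs ht
  calc ∫ ω in B, (μ[Y|m]) ω ∂μ = ∫ ω, (μ[Y|m]) ω * B.indicator 1 ω ∂μ :=
        (integral_mul_indicator_one hB _).symm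
    _ = ∫ ω, (μ[Y|m]) ω * (μ⟦B|m⟧) ω ∂μ :=
        (integral_mul_condExp hm stronglyMeasurable_condExp
          (integrable_condExp.mul_bdd hBi.aestronglyMeasurable hB_le) hBi).symm
    _ = ∫ ω, (μ⟦B|m⟧) ω * Y ω ∂μ := by
        simp_rw [mul_comm _ ((μ⟦B|m⟧) _)]
        exact integral_mul_condExp hm stronglyMeasurable_condExp (hYi.bdd_mul hP_meas hP_le) hYi
    _ = ∫ ω, Y ω * B.indicator 1 ω ∂μ := by simp_rw [mul_comm _ (Y _), hY_swap]
    _ = ∫ ω in B, Y ω ∂μ := integral_mul_indicator_one hB Y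

end ProbabilityTheory

theorem surrogate_index_identification_single_trial_general
    {Ω : Type*} [mΩ : MeasurableSpace Ω] [sb : StandardBorelSpace Ω]
    (P : Measure Ω) [IsProbabilityMeasure P]
    (Z : Ω → Bool) (Y : Ω → ℝ)
    (hZ : Measurable Z) (hY : Measurable Y)
    (C : ℝ) (hYbdd : ∀ ω, |Y ω| ≤ C)
    (𝒢 : MeasurableSpace Ω)
    (h𝒢 : 𝒢 ≤ mΩ)
    (hsurrogacy : @CondIndepFun Ω 𝒢 mΩ sb h𝒢 ℝ Bool _ _ Y Z P _) :
    (∀ z : Bool, ∫ ω in {ω | Z ω = z}, Y ω ∂P = ∫ ω in {ω | Z ω = z}, (P[Y|𝒢]) ω ∂P) ∧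
    (0 < P {ω | Z ω = true} → 0 < P {ω | Z ω = false} →
      ∀ f : ℝ × ℝ → ℝ,
        f ((P {ω | Z ω = true}).toReal⁻¹ * ∫ ω in {ω | Z ω = true}, Y ω ∂P,
           (P {ω | Z ω = false}).toReal⁻¹ * ∫ ω in {ω | Z ω = false}, Y ω ∂P) =
        f ((P {ω | Z ω = true}).toReal⁻¹ * ∫ ω in {ω | Z ω = true}, (P[Y|𝒢]) ω ∂P,
           (P {ω | Z ω = false}).toReal⁻¹ * ∫ ω in {ω | Z ω = false}, (P[Y|𝒢]) ω ∂P)) := by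
  have hYi : Integrable Y P :=
    .of_bound hY.aestronglyMeasurable C (.of_forall fun ω ↦ (Real.norm_eq_abs _).trans_le (hYbdd ω))
  have arm (z : Bool) : ∫ ω in {ω | Z ω = z}, Y ω ∂P = ∫ ω in {ω | Z ω = z}, (P[Y|𝒢]) ω ∂P :=
    (hsurrogacy.setIntegral_condExp_preimage hY hYi hZ (measurableSet_singleton z)).symm
  exact ⟨arm, fun _ _ f ↦ by rw [arm true, arm false]⟩

/-- Identification of arm-specific means via the surrogate index in a single trial:
under surrogacy (`Y ⟂ Z ∣ σ(X,S)`), the treatment-arm-specific means of the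
clinical endpoint `Y` equal those of the surrogate index `E[Y ∣ σ(X,S)]`, and hence
any contrast of arm-specific means agrees for `Y` and for the surrogate index. -/
theorem surrogate_index_identification_single_trial
    {Ω 𝒳 𝒮 : Type*} [mΩ : MeasurableSpace Ω] [sb : StandardBorelSpace Ω]
    [MeasurableSpace 𝒳] [MeasurableSpace 𝒮]
    (P : Measure Ω) [IsProbabilityMeasure P]
    (X : Ω → 𝒳) (S : Ω → 𝒮) (Z : Ω → Bool) (Y : Ω → ℝ)
    (hX : Measurable X) (hS : Measurable S) (hZ : Measurable Z) (hY : Measurable Y)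
    (C : ℝ) (hYbdd : ∀ ω, |Y ω| ≤ C)
    (𝒢 : MeasurableSpace Ω)
    (h𝒢def : 𝒢 = MeasurableSpace.comap (fun ω => (X ω, S ω)) inferInstance)
    (h𝒢 : 𝒢 ≤ mΩ)
    (hsurrogacy : @CondIndepFun Ω 𝒢 mΩ sb h𝒢 ℝ Bool _ _ Y Z P _) :
    (∀ z : Bool, ∫ ω in {ω | Z ω = z}, Y ω ∂P = ∫ ω in {ω | Z ω = z}, (P[Y|𝒢]) ω ∂P) ∧
    (0 < P {ω | Z ω = true} → 0 < P {ω | Z ω = false} →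
      ∀ f : ℝ × ℝ → ℝ,
        f ((P {ω | Z ω = true}).toReal⁻¹ * ∫ ω in {ω | Z ω = true}, Y ω ∂P,
           (P {ω | Z ω = false}).toReal⁻¹ * ∫ ω in {ω | Z ω = false}, Y ω ∂P) =
        f ((P {ω | Z ω = true}).toReal⁻¹ * ∫ ω in {ω | Z ω = true}, (P[Y|𝒢]) ω ∂P,
           (P {ω | Z ω = false}).toReal⁻¹ * ∫ ω in {ω | Z ω = false}, (P[Y|𝒢]) ω ∂P)) :=
  surrogate_index_identification_single_trial_general (mΩ := mΩ) (sb := sb) P Z Y hZ hY C hYbdd 𝒢 h𝒢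
    hsurrogacy
end

section
/- Let (Ω, ℱ, P) be a probability space with Ω a standard Borel space, let X : Ω → 𝒳 and S : Ω → 𝒮 be measurable maps into measurable spaces, let A : Ω → {0,1} and Z : Ω → {0,1} be measurable, and let Y : Ω → ℝ be bounded and measurable. Let 𝒢 denote the σ-algebra generated by ω ↦ (X(ω), S(ω)), let 𝒜 denote the σ-algebra generated by A, and write E[Y | 𝒢] for the conditional expectation of Y given 𝒢. Assume (surrogacy) Y and Z are conditionally independent given 𝒜 ⊔ 𝒢 (the σ-algebra generated by 𝒜 and 𝒢 together), and (comparability) Y and A are conditionally independent given 𝒢. Then for every z ∈ {0,1}, ∫_{{A = 0} ∩ {Z = z}} Y dP = ∫_{{A = 0} ∩ {Z = z}} E[Y | 𝒢] dP. -/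
/-!
Conditionally on `m'`, that is, under almost every measure `condExpKernel μ m' ω`, the variables
`Y` and `W` are independent, so `E[Y 1{W ∈ t} | m'] = E[Y | m'] P(W ∈ t | m')`; by the pull-out
property `E[E[Y | m'] 1{W ∈ t} | m']` is the same product. Hence `Y` and `E[Y | m']` have the
same integral over every `B ∩ {W ∈ t}` with `B ∈ m'`, and by the π-λ theorem
`E[Y | σ(W) ⊔ m'] = E[Y | m']`. Surrogacy, applied on `{A = 0} ∈ σ(A) ⊔ 𝒢` with `W = Z`, replaces
`Y` by `E[Y | σ(A) ⊔ 𝒢]` on `{A = 0, Z = z}`, and comparability, with `W = A`, identifies that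
conditional expectation with the surrogate index `E[Y | 𝒢]`.
-/

open MeasureTheory ProbabilityTheory Set

namespace MeasurableSpace
variable {α : Type*}

lemma isPiSystem_image2_inter (m₁ m₂ : MeasurableSpace α) :
    IsPiSystem (image2 (· ∩ ·) {s | MeasurableSet[m₁] s} {t | MeasurableSet[m₂] t}) := by
  rintro _ ⟨s₁, hs₁, t₁, ht₁, rfl⟩ _ ⟨s₂, hs₂, t₂, ht₂, rfl⟩ -
  exact ⟨s₁ ∩ s₂, hs₁.inter hs₂, t₁ ∩ t₂, ht₁.inter ht₂, by rw [inter_inter_inter_comm]⟩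

lemma generateFrom_image2_inter (m₁ m₂ : MeasurableSpace α) :
    generateFrom (image2 (· ∩ ·) {s | MeasurableSet[m₁] s} {t | MeasurableSet[m₂] t}) =
      m₁ ⊔ m₂ := by
  refine le_antisymm (generateFrom_le ?_) (sup_le (fun s hs ↦ ?_) (fun t ht ↦ ?_))
  · rintro _ ⟨s, hs, t, ht, rfl⟩
    exact (le_sup_left (b := m₂) s hs).inter (le_sup_right (a := m₁) t ht)
  · exact measurableSet_generateFrom ⟨s, hs, univ, .univ, inter_univ s⟩
  · exact measurableSet_generateFrom ⟨univ, .univ, t, ht, univ_inter t⟩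

end MeasurableSpace

namespace MeasureTheory

lemma setIntegral_eq_of_isPiSystem_of_univ_mem {α E : Type*} {m m₀ : MeasurableSpace α}
    [NormedAddCommGroup E] [NormedSpace ℝ E] {μ : Measure α} {f g : α → E}
    (hm : m ≤ m₀) (hf : Integrable f μ) (hg : Integrable g μ) {S : Set (Set α)}
    (h_eq : m = MeasurableSpace.generateFrom S) (h_pi : IsPiSystem S) (h_univ : univ ∈ S)
    (basic : ∀ t ∈ S, ∫ x in t, f x ∂μ = ∫ x in t, g x ∂μ) {t : Set α}
    (ht : MeasurableSet[m] t) : ∫ x in t, f x ∂μ = ∫ x in t, g x ∂μ := by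
  induction t, ht using MeasurableSpace.induction_on_inter h_eq h_pi with
  | empty => simp
  | basic t ht => exact basic t ht
  | compl t ht ih =>
    rw [setIntegral_compl (hm t ht) hf, setIntegral_compl (hm t ht) hg, ih,
      ← setIntegral_univ, basic univ h_univ, setIntegral_univ]
  | iUnion s hdisj hs ih =>
    rw [integral_iUnion (fun i ↦ hm _ (hs i)) hdisj hf.integrableOn,
      integral_iUnion (fun i ↦ hm _ (hs i)) hdisj hg.integrableOn]
    simp only [ih]

lemma condExp_indicator_condExp {Ω : Type*} {m' mΩ : MeasurableSpace Ω} {μ : Measure Ω}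
    [IsFiniteMeasure μ] {Y : Ω → ℝ} {s : Set Ω} (hs : MeasurableSet s) :
    μ[s.indicator (μ[Y | m']) | m'] =ᵐ[μ] μ[Y | m'] * μ[s.indicator 1 | m'] := by
  have h_mul : s.indicator (μ[Y | m']) = μ[Y | m'] * s.indicator 1 := by
    ext ω; simp [indicator]
  rw [h_mul]
  exact condExp_mul_of_stronglyMeasurable_left stronglyMeasurable_condExp
    (h_mul ▸ integrable_condExp.indicator hs) ((integrable_const 1).indicator hs)

end MeasureTheory

namespace ProbabilityTheory

variable {Ω β : Type*} {m' mΩ : MeasurableSpace Ω} {μ : Measure Ω} [IsFiniteMeasure μ]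
  [StandardBorelSpace Ω] {hm' : m' ≤ mΩ}

lemma CondIndepFun.ae_indepFun_condExpKernel {β' : Type*} {mβ : MeasurableSpace β}
    {mβ' : MeasurableSpace β'} [MeasurableSpace.CountableOrCountablyGenerated Ω (β × β')]
    {f : Ω → β} {g : Ω → β'} (h : CondIndepFun m' hm' f g μ) (hf : Measurable f)
    (hg : Measurable g) :
    ∀ᵐ ω ∂μ, IndepFun f g (condExpKernel μ m' ω) := by
  have := (condIndepFun_iff_map_prod_eq_prod_map_map hf hg).1 h
  filter_upwards [ae_of_ae_trim hm' this] with ω hω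
  rw [indepFun_iff_map_prod_eq_prod_map_map hf.aemeasurable hg.aemeasurable]
  simpa [Kernel.map_apply _ hf, Kernel.map_apply _ hg, Kernel.map_apply _ (hf.prodMk hg),
    Kernel.prod_apply] using hω

variable {mβ : MeasurableSpace β} [MeasurableSpace.CountableOrCountablyGenerated Ω (ℝ × β)]
  {Y : Ω → ℝ} {W : Ω → β}

lemma CondIndepFun.condExp_indicator_preimage (h : CondIndepFun m' hm' Y W μ)
    (hY : Measurable Y) (hW : Measurable W) (hYi : Integrable Y μ) {t : Set β}
    (ht : MeasurableSet t) :
    μ[(W ⁻¹' t).indicator Y | m'] =ᵐ[μ] μ[Y | m'] * μ[(W ⁻¹' t).indicator 1 | m'] := by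
  have h_mul : (W ⁻¹' t).indicator Y = Y * (t.indicator 1 ∘ W) := by
    ext ω; by_cases hω : W ω ∈ t <;> simp [hω]
  filter_upwards [condExp_ae_eq_integral_condExpKernel hm' (hYi.indicator (hW ht)),
    condExp_ae_eq_integral_condExpKernel hm' hYi,
    condExp_ae_eq_integral_condExpKernel hm' ((integrable_const (1 : ℝ)).indicator (hW ht)),
    h.ae_indepFun_condExpKernel hY hW] with ω h_prod h_Y h_W h_indep
  rw [Pi.mul_apply, h_prod, h_Y, Pi.one_def, h_W, h_mul]
  exact (h_indep.comp measurable_id (measurable_const.indicator ht)).integral_mul_eq_mul_integral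
    hY.aestronglyMeasurable ((measurable_const.indicator ht).comp hW).aestronglyMeasurable

lemma CondIndepFun.setIntegral_inter_preimage (h : CondIndepFun m' hm' Y W μ)
    (hY : Measurable Y) (hW : Measurable W) (hYi : Integrable Y μ) {B : Set Ω}
    (hB : MeasurableSet[m'] B) {t : Set β} (ht : MeasurableSet t) :
    ∫ ω in B ∩ W ⁻¹' t, Y ω ∂μ = ∫ ω in B ∩ W ⁻¹' t, (μ[Y | m']) ω ∂μ := by
  have hWt := hW ht
  calc ∫ ω in B ∩ W ⁻¹' t, Y ω ∂μ = ∫ ω in B, (W ⁻¹' t).indicator Y ω ∂μ :=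
        (setIntegral_indicator hWt).symm
    _ = ∫ ω in B, (μ[(W ⁻¹' t).indicator Y | m']) ω ∂μ :=
        (setIntegral_condExp hm' (hYi.indicator hWt) hB).symm
    _ = ∫ ω in B, (μ[(W ⁻¹' t).indicator (μ[Y | m']) | m']) ω ∂μ :=
        integral_congr_ae <| ae_restrict_of_ae <|
          (h.condExp_indicator_preimage hY hW hYi ht).trans (condExp_indicator_condExp hWt).symm
    _ = ∫ ω in B, (W ⁻¹' t).indicator (μ[Y | m']) ω ∂μ :=
        setIntegral_condExp hm' (integrable_condExp.indicator hWt) hB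
    _ = ∫ ω in B ∩ W ⁻¹' t, (μ[Y | m']) ω ∂μ := setIntegral_indicator hWt

lemma CondIndepFun.condExp_comap_sup_ae_eq (h : CondIndepFun m' hm' Y W μ)
    (hY : Measurable Y) (hW : Measurable W) (hYi : Integrable Y μ) :
    μ[Y | mβ.comap W ⊔ m'] =ᵐ[μ] μ[Y | m'] := by
  have hle : mβ.comap W ⊔ m' ≤ mΩ := sup_le hW.comap_le hm'
  have h_meas : AEStronglyMeasurable[mβ.comap W ⊔ m'] (μ[Y | m']) μ :=
    ((stronglyMeasurable_condExp (m := m') (μ := μ) (f := Y)).mono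
      (le_sup_right : m' ≤ mβ.comap W ⊔ m')).aestronglyMeasurable
  refine (ae_eq_condExp_of_forall_setIntegral_eq hle hYi
    (fun _ _ _ ↦ integrable_condExp.integrableOn) (fun s hs _ ↦ ?_) h_meas).symm
  refine setIntegral_eq_of_isPiSystem_of_univ_mem hle integrable_condExp hYi
    (MeasurableSpace.generateFrom_image2_inter _ _).symm
    (MeasurableSpace.isPiSystem_image2_inter _ _)
    ⟨univ, @MeasurableSet.univ _ (mβ.comap W), univ, @MeasurableSet.univ _ m', inter_univ _⟩ ?_ hs
  rintro _ ⟨_, ⟨t, ht, rfl⟩, B, hB, rfl⟩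
  change ∫ ω in W ⁻¹' t ∩ B, _ ∂μ = ∫ ω in W ⁻¹' t ∩ B, _ ∂μ
  rw [inter_comm]
  exact (h.setIntegral_inter_preimage hY hW hYi hB ht).symm

end ProbabilityTheory

theorem surrogate_index_identification_two_sources_general
    {Ω : Type*} [mΩ : MeasurableSpace Ω] [sb : StandardBorelSpace Ω]
    (P : Measure Ω) [IsProbabilityMeasure P]
    (A Z : Ω → Bool) (Y : Ω → ℝ)
    (hA : Measurable A) (hZ : Measurable Z)
    (hY : Measurable Y) (C : ℝ) (hYbdd : ∀ ω, |Y ω| ≤ C)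
    (𝒢 𝒜 : MeasurableSpace Ω)
    (h𝒜def : 𝒜 = MeasurableSpace.comap A inferInstance)
    (h𝒢 : 𝒢 ≤ mΩ) (h𝒜𝒢 : 𝒜 ⊔ 𝒢 ≤ mΩ)
    (hsurrogacy : @CondIndepFun Ω (𝒜 ⊔ 𝒢) mΩ sb h𝒜𝒢 ℝ Bool _ _ Y Z P _)
    (hcomparability : @CondIndepFun Ω 𝒢 mΩ sb h𝒢 ℝ Bool _ _ Y A P _) :
    ∀ z : Bool,
      ∫ ω in {ω | A ω = false ∧ Z ω = z}, Y ω ∂P =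
        ∫ ω in {ω | A ω = false ∧ Z ω = z}, (P[Y|𝒢]) ω ∂P := by
  intro z
  subst h𝒜def
  have hYi : Integrable Y P :=
    .of_bound hY.aestronglyMeasurable C
      (.of_forall fun ω ↦ (Real.norm_eq_abs _).trans_le (hYbdd ω))
  have h_experimental :
      MeasurableSet[MeasurableSpace.comap A inferInstance ⊔ 𝒢] (A ⁻¹' {false}) :=
    le_sup_left (b := 𝒢) _ ⟨{false}, measurableSet_singleton false, rfl⟩
  calc ∫ ω in A ⁻¹' {false} ∩ Z ⁻¹' {z}, Y ω ∂P
      = ∫ ω in A ⁻¹' {false} ∩ Z ⁻¹' {z},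
          (P[Y|MeasurableSpace.comap A inferInstance ⊔ 𝒢]) ω ∂P :=
        hsurrogacy.setIntegral_inter_preimage hY hZ hYi h_experimental (measurableSet_singleton z)
    _ = ∫ ω in A ⁻¹' {false} ∩ Z ⁻¹' {z}, (P[Y|𝒢]) ω ∂P :=
        integral_congr_ae <| ae_restrict_of_ae <| hcomparability.condExp_comap_sup_ae_eq hY hA hYi

/-- Identification result of the surrogate-index framework with two data sources:
under surrogacy (`Y ⟂ Z ∣ σ(A) ⊔ σ(X,S)`) and comparability (`Y ⟂ A ∣ σ(X,S)`),
the treatment-arm-specific means of the clinical endpoint `Y` in the experimental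
study (`A = 0`) are identified by the corresponding means of the surrogate index
`E[Y ∣ σ(X,S)]`. -/
theorem surrogate_index_identification_two_sources
    {Ω 𝒳 𝒮 : Type*} [mΩ : MeasurableSpace Ω] [sb : StandardBorelSpace Ω]
    [MeasurableSpace 𝒳] [MeasurableSpace 𝒮]
    (P : Measure Ω) [IsProbabilityMeasure P]
    (X : Ω → 𝒳) (S : Ω → 𝒮) (A Z : Ω → Bool) (Y : Ω → ℝ)
    (hX : Measurable X) (hS : Measurable S) (hA : Measurable A) (hZ : Measurable Z)
    (hY : Measurable Y) (C : ℝ) (hYbdd : ∀ ω, |Y ω| ≤ C)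
    (𝒢 𝒜 : MeasurableSpace Ω)
    (h𝒢def : 𝒢 = MeasurableSpace.comap (fun ω => (X ω, S ω)) inferInstance)
    (h𝒜def : 𝒜 = MeasurableSpace.comap A inferInstance)
    (h𝒢 : 𝒢 ≤ mΩ) (h𝒜𝒢 : 𝒜 ⊔ 𝒢 ≤ mΩ)
    (hsurrogacy : @CondIndepFun Ω (𝒜 ⊔ 𝒢) mΩ sb h𝒜𝒢 ℝ Bool _ _ Y Z P _)
    (hcomparability : @CondIndepFun Ω 𝒢 mΩ sb h𝒢 ℝ Bool _ _ Y A P _) :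
    ∀ z : Bool,
      ∫ ω in {ω | A ω = false ∧ Z ω = z}, Y ω ∂P =
        ∫ ω in {ω | A ω = false ∧ Z ω = z}, (P[Y|𝒢]) ω ∂P :=
  surrogate_index_identification_two_sources_general (mΩ := mΩ) (sb := sb) P A Z Y hA hZ hY C hYbdd
    𝒢 𝒜 h𝒜def h𝒢 h𝒜𝒢 hsurrogacy hcomparability
end

section
/- Let (𝔻, d) be a metric space, 𝒢 ⊆ 𝔻, p ≥ 1, Θ ⊆ ℝᵖ, and let Φ : 𝔻 → ℝᵖ → ℝᵖ and θ₀ : 𝒢 → Θ satisfy Φ(g)(θ₀(g)) = 0 for every g ∈ 𝒢. Fix g* ∈ 𝒢 and assume: (i) for every sequence (θ_N) in Θ, if Φ(g*)(θ_N) → 0 then θ_N → θ₀(g*); and (vi) there exists L ≥ 0 such that for all g₁, g₂ ∈ 𝒢 and all θ ∈ Θ, ‖Φ(g₁)(θ) − Φ(g₂)(θ)‖₂ ≤ L·d(g₁, g₂). Then for every sequence (g_N) in 𝒢 with d(g_N, g*) → 0, one has θ₀(g_N) → θ₀(g*); that is, the map g ↦ θ₀(g) is (sequentially) continuous at g*.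 -/
/-!
Since `Φ g_N (θ₀ g_N) = 0`, the uniform Lipschitz bound gives
`‖Φ g* (θ₀ g_N)‖ ≤ L · d(g_N, g*) → 0`, and identifiability at `g*` turns this into
`θ₀ g_N → θ₀ g*`.
-/

open Filter Topology

theorem tendsto_apply_nhds_zero_of_apply_eq_zero {ι α X E : Type*} [PseudoMetricSpace α]
    [SeminormedAddCommGroup E] {l : Filter ι} {Φ : α → X → E} {g : ι → α} {θ : ι → X}
    {g₀ : α} {L : ℝ} (hroot : ∀ i, Φ (g i) (θ i) = 0)
    (hLip : ∀ i, ‖Φ g₀ (θ i) - Φ (g i) (θ i)‖ ≤ L * dist (g i) g₀)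
    (hg : Tendsto (fun i => dist (g i) g₀) l (𝓝 0)) :
    Tendsto (fun i => Φ g₀ (θ i)) l (𝓝 0) :=
  squeeze_zero_norm (fun i => by simpa only [hroot i, sub_zero] using hLip i)
    (by simpa using hg.const_mul L)

theorem root_map_continuous_at_gstar_general
    {𝔻 : Type*} [MetricSpace 𝔻] {p : ℕ}
    (𝒢 : Set 𝔻) (Θ : Set (EuclideanSpace ℝ (Fin p)))
    (Φ : 𝔻 → EuclideanSpace ℝ (Fin p) → EuclideanSpace ℝ (Fin p))
    (θ₀ : 𝔻 → EuclideanSpace ℝ (Fin p))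
    (hθ₀mem : ∀ g ∈ 𝒢, θ₀ g ∈ Θ)
    (hroot : ∀ g ∈ 𝒢, Φ g (θ₀ g) = 0)
    (gstar : 𝔻) (hgstar : gstar ∈ 𝒢)
    -- condition (i): identifiability at `g*`
    (hident : ∀ θN : ℕ → EuclideanSpace ℝ (Fin p), (∀ N, θN N ∈ Θ) →
      Tendsto (fun N => Φ gstar (θN N)) atTop (nhds 0) →
      Tendsto θN atTop (nhds (θ₀ gstar)))
    -- condition (vi): uniform Lipschitz continuity in `g`
    (hLip : ∃ L : ℝ, 0 ≤ L ∧ ∀ g₁ ∈ 𝒢, ∀ g₂ ∈ 𝒢, ∀ θ ∈ Θ,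
      ‖Φ g₁ θ - Φ g₂ θ‖ ≤ L * dist g₁ g₂) :
    ∀ gN : ℕ → 𝔻, (∀ N, gN N ∈ 𝒢) →
      Tendsto (fun N => dist (gN N) gstar) atTop (nhds 0) →
      Tendsto (fun N => θ₀ (gN N)) atTop (nhds (θ₀ gstar)) := by
  intro gN hgN hd
  obtain ⟨L, -, hL⟩ := hLip
  have hmem N : θ₀ (gN N) ∈ Θ := hθ₀mem _ (hgN N)
  refine hident _ hmem ?_
  refine tendsto_apply_nhds_zero_of_apply_eq_zero (L := L) (fun N => hroot _ (hgN N))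
    (fun N => ?_) hd
  simpa only [dist_comm] using hL gstar hgstar _ (hgN N) _ (hmem N)

/-- Continuity of the data-adaptive target parameter in the indexing function:
under identifiability at `g*` (condition (i)) and uniform Lipschitz continuity of
the expected estimating function in `g` (condition (vi)), the root map `g ↦ θ₀(g)`
is sequentially continuous at `g*` along sequences in `𝒢`. -/
theorem root_map_continuous_at_gstar
    {𝔻 : Type*} [MetricSpace 𝔻] {p : ℕ} (hp : 1 ≤ p)
    (𝒢 : Set 𝔻) (Θ : Set (EuclideanSpace ℝ (Fin p)))
    (Φ : 𝔻 → EuclideanSpace ℝ (Fin p) → EuclideanSpace ℝ (Fin p))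
    (θ₀ : 𝔻 → EuclideanSpace ℝ (Fin p))
    (hθ₀mem : ∀ g ∈ 𝒢, θ₀ g ∈ Θ)
    (hroot : ∀ g ∈ 𝒢, Φ g (θ₀ g) = 0)
    (gstar : 𝔻) (hgstar : gstar ∈ 𝒢)
    -- condition (i): identifiability at `g*`
    (hident : ∀ θN : ℕ → EuclideanSpace ℝ (Fin p), (∀ N, θN N ∈ Θ) →
      Tendsto (fun N => Φ gstar (θN N)) atTop (nhds 0) →
      Tendsto θN atTop (nhds (θ₀ gstar)))
    -- condition (vi): uniform Lipschitz continuity in `g`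
    (hLip : ∃ L : ℝ, 0 ≤ L ∧ ∀ g₁ ∈ 𝒢, ∀ g₂ ∈ 𝒢, ∀ θ ∈ Θ,
      ‖Φ g₁ θ - Φ g₂ θ‖ ≤ L * dist g₁ g₂) :
    ∀ gN : ℕ → 𝔻, (∀ N, gN N ∈ 𝒢) →
      Tendsto (fun N => dist (gN N) gstar) atTop (nhds 0) →
      Tendsto (fun N => θ₀ (gN N)) atTop (nhds (θ₀ gstar)) :=
  root_map_continuous_at_gstar_general 𝒢 Θ Φ θ₀ hθ₀mem hroot gstar hgstar hident hLip
end
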